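/- Let A₁, A₂, B₁, B₂, Y₁, Y₂ ∈ ℚ[x,x⁻¹][[t]] with ord_t B₁ > 0, ord_t B₂ > 0, ord_t Y₁ > 0 and ord_t Y₂ > 0. Then there exists at most one pair (U₁, U₂) of formal power series in ℚ[[x,t]]² satisfying the system U₁(t,x) = A₁(t,x) + B₁(t,x)·U₂(t, Y₁(t,x)) and U₂(t,x) = A₂(t,x) + B₂(t,x)·U₁(t, Y₂(t,x)). -/

import Mathlib

noncomputable section

/-- The composition `W(t, Y(t,x))`, obtained by substituting the series
`Y ∈ ℚ[x,x⁻¹][[t]]` for the variable `x` in the formal power series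
`W ∈ ℚ[[x,t]]`.  Here variable `0` of `W` is `x` and variable `1` is `t`, and
`ℚ[x,x⁻¹][[t]]` is modelled as `PowerSeries (LaurentPolynomial ℚ)`.  Whenever
`Y` has positive `t`-adic valuation, only finitely many terms of `W` contribute
to each power of `t`, and the formula below (in which the inner sums are then
actually finite sums over all relevant indices) computes the genuine
composition `∑_{i,n} (coeff of x^i t^n in W) · Y(t,x)^i · t^n`. -/
def substX (W : MvPowerSeries (Fin 2) ℚ) (Y : PowerSeries (LaurentPolynomial ℚ)) :
    PowerSeries (LaurentPolynomial ℚ) :=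
  PowerSeries.mk fun m =>
    ∑ n ∈ Finset.range (m + 1), ∑ i ∈ Finset.range (m + 1),
      MvPowerSeries.coeff (Finsupp.single 0 i + Finsupp.single 1 n) W •
        PowerSeries.coeff (m - n) (Y ^ i)

/-- The statement that the power series `U, W ∈ ℚ[[x,t]]` satisfy the equation
`U(t,x) = A(t,x) + B(t,x) · W(t, Y(t,x))`, expressed by comparing, for every
`m ∈ ℕ` and `k ∈ ℤ`, the coefficients of `x^k t^m` of the two sides (the
coefficient of `x^k t^m` of `U` being `0` for `k < 0`). -/
def IsCompEq (A B Y : PowerSeries (LaurentPolynomial ℚ))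
    (U W : MvPowerSeries (Fin 2) ℚ) : Prop :=
  ∀ (m : ℕ) (k : ℤ),
    (if 0 ≤ k then
        MvPowerSeries.coeff (Finsupp.single 0 k.toNat + Finsupp.single 1 m) U
      else 0)
      = AddMonoidAlgebra.coeff (PowerSeries.coeff m (A + B * substX W Y)) k

/- Subtracting the two instances of each equation, the differences `D₁ = U₁ - V₁`,
`D₂ = U₂ - V₂` satisfy `D₁ = B₁ · D₂(t, Y₁)` and `D₂ = B₂ · D₁(t, Y₂)`. Since `ord_t B > 0`,
the coefficient of `t^m` on the right only involves coefficients of `t^n`, `n < m`, of the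
other difference, so strong induction on `m` kills every coefficient of both differences. -/

lemma MvPowerSeries.ext_fin_two {R : Type*} [Semiring R] {U V : MvPowerSeries (Fin 2) R}
    (h : ∀ i n, coeff (Finsupp.single 0 i + Finsupp.single 1 n) U =
      coeff (Finsupp.single 0 i + Finsupp.single 1 n) V) : U = V := by
  ext d
  have hd : d = Finsupp.single 0 (d 0) + Finsupp.single 1 (d 1) := by
    ext j
    fin_cases j <;> simp
  rw [hd]
  exact h _ _

lemma substX_sub (U V : MvPowerSeries (Fin 2) ℚ) (Y : PowerSeries (LaurentPolynomial ℚ)) :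
    substX (U - V) Y = substX U Y - substX V Y := by
  ext m
  simp [substX, sub_smul, Finset.sum_sub_distrib]

lemma coeff_substX_eq_zero {D : MvPowerSeries (Fin 2) ℚ} {p : ℕ}
    (hD : ∀ n ≤ p, ∀ i, MvPowerSeries.coeff (Finsupp.single 0 i + Finsupp.single 1 n) D = 0)
    (Y : PowerSeries (LaurentPolynomial ℚ)) :
    PowerSeries.coeff p (substX D Y) = 0 := by
  simp only [substX, PowerSeries.coeff_mk]
  refine Finset.sum_eq_zero fun n hn => Finset.sum_eq_zero fun i _ => ?_
  rw [hD n (Nat.lt_succ_iff.mp (Finset.mem_range.mp hn)) i, zero_smul]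

lemma coeff_mul_substX_eq_zero {B : PowerSeries (LaurentPolynomial ℚ)}
    (hB : PowerSeries.constantCoeff B = 0) {D : MvPowerSeries (Fin 2) ℚ} {m : ℕ}
    (hD : ∀ n < m, ∀ i, MvPowerSeries.coeff (Finsupp.single 0 i + Finsupp.single 1 n) D = 0)
    (Y : PowerSeries (LaurentPolynomial ℚ)) :
    PowerSeries.coeff m (B * substX D Y) = 0 := by
  rw [PowerSeries.coeff_mul]
  refine Finset.sum_eq_zero fun p hp => ?_
  rw [Finset.HasAntidiagonal.mem_antidiagonal] at hp
  rcases Nat.eq_zero_or_pos p.1 with h0 | hpos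
  · rw [h0, PowerSeries.coeff_zero_eq_constantCoeff, hB, zero_mul]
  · rw [coeff_substX_eq_zero (fun n hn => hD n (by omega)) Y, mul_zero]

lemma IsCompEq.coeff_sub {A B Y : PowerSeries (LaurentPolynomial ℚ)}
    {U W V X : MvPowerSeries (Fin 2) ℚ} (hU : IsCompEq A B Y U W) (hV : IsCompEq A B Y V X)
    (m i : ℕ) :
    MvPowerSeries.coeff (Finsupp.single 0 i + Finsupp.single 1 m) (U - V)
      = AddMonoidAlgebra.coeff (PowerSeries.coeff m (B * substX (W - X) Y)) (i : ℤ) := by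
  have hUi := hU m i
  have hVi := hV m i
  simp only [Int.toNat_natCast, if_pos (Int.natCast_nonneg i)] at hUi hVi
  rw [map_sub, hUi, hVi, substX_sub, mul_sub, ← Finsupp.sub_apply,
    ← AddMonoidAlgebra.coeff_sub, ← map_sub, add_sub_add_left_eq_sub]

lemma IsCompEq.coeff_sub_eq_zero {A B Y : PowerSeries (LaurentPolynomial ℚ)}
    (hB : PowerSeries.constantCoeff B = 0) {U W V X : MvPowerSeries (Fin 2) ℚ}
    (hU : IsCompEq A B Y U W) (hV : IsCompEq A B Y V X) {m : ℕ}
    (hWX : ∀ n < m, ∀ i,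
      MvPowerSeries.coeff (Finsupp.single 0 i + Finsupp.single 1 n) (W - X) = 0) (i : ℕ) :
    MvPowerSeries.coeff (Finsupp.single 0 i + Finsupp.single 1 m) (U - V) = 0 := by
  rw [hU.coeff_sub hV, coeff_mul_substX_eq_zero hB hWX]
  rfl

theorem at_most_one_solution_pair_general (A₁ A₂ B₁ B₂ Y₁ Y₂ : PowerSeries (LaurentPolynomial ℚ))
    (hB₁ : PowerSeries.constantCoeff B₁ = 0)
    (hB₂ : PowerSeries.constantCoeff B₂ = 0)
    (U₁ U₂ V₁ V₂ : MvPowerSeries (Fin 2) ℚ)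
    (hU₁ : IsCompEq A₁ B₁ Y₁ U₁ U₂) (hU₂ : IsCompEq A₂ B₂ Y₂ U₂ U₁)
    (hV₁ : IsCompEq A₁ B₁ Y₁ V₁ V₂) (hV₂ : IsCompEq A₂ B₂ Y₂ V₂ V₁) :
    U₁ = V₁ ∧ U₂ = V₂ := by
  have hzero : ∀ m i,
      MvPowerSeries.coeff (Finsupp.single 0 i + Finsupp.single 1 m) (U₁ - V₁) = 0 ∧
      MvPowerSeries.coeff (Finsupp.single 0 i + Finsupp.single 1 m) (U₂ - V₂) = 0 := by
    intro m
    induction m using Nat.strong_induction_on with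
    | _ m ih =>
      exact fun i => ⟨hU₁.coeff_sub_eq_zero hB₁ hV₁ (fun n hn j => (ih n hn j).2) i,
        hU₂.coeff_sub_eq_zero hB₂ hV₂ (fun n hn j => (ih n hn j).1) i⟩
  refine ⟨MvPowerSeries.ext_fin_two fun i n => ?_, MvPowerSeries.ext_fin_two fun i n => ?_⟩
  · exact sub_eq_zero.mp ((map_sub _ U₁ V₁).symm.trans (hzero n i).1)
  · exact sub_eq_zero.mp ((map_sub _ U₂ V₂).symm.trans (hzero n i).2)

/-- Lemma 2: if `A₁, A₂, B₁, B₂, Y₁, Y₂ ∈ ℚ[x,x⁻¹][[t]]` with `ord_t B₁ > 0`,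
`ord_t B₂ > 0`, `ord_t Y₁ > 0` and `ord_t Y₂ > 0`, then there is at most one
pair `(U₁, U₂)` of power series in `ℚ[[x,t]]²` with
`U₁(t,x) = A₁(t,x) + B₁(t,x)·U₂(t,Y₁(t,x))` and
`U₂(t,x) = A₂(t,x) + B₂(t,x)·U₁(t,Y₂(t,x))`. -/
theorem at_most_one_solution_pair (A₁ A₂ B₁ B₂ Y₁ Y₂ : PowerSeries (LaurentPolynomial ℚ))
    (hB₁ : PowerSeries.constantCoeff B₁ = 0)
    (hB₂ : PowerSeries.constantCoeff B₂ = 0)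
    (hY₁ : PowerSeries.constantCoeff Y₁ = 0)
    (hY₂ : PowerSeries.constantCoeff Y₂ = 0)
    (U₁ U₂ V₁ V₂ : MvPowerSeries (Fin 2) ℚ)
    (hU₁ : IsCompEq A₁ B₁ Y₁ U₁ U₂) (hU₂ : IsCompEq A₂ B₂ Y₂ U₂ U₁)
    (hV₁ : IsCompEq A₁ B₁ Y₁ V₁ V₂) (hV₂ : IsCompEq A₂ B₂ Y₂ V₂ V₁) :
    U₁ = V₁ ∧ U₂ = V₂ :=
  at_most_one_solution_pair_general A₁ A₂ B₁ B₂ Y₁ Y₂ hB₁ hB₂ U₁ U₂ V₁ V₂ hU₁ hU₂ hV₁ hV₂
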